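/- Let S ≤ M n be a submodule invariant under T, i.e., T '' S ⊆ S. Then there exists a finite family of vectors v_1, …, v_m ∈ S such that the combined family (v_1, T v_1, v_2, T v_2, …, v_m, T v_m) is an F₂-basis of S. Consequently (by the support-invariance of T), every GF(4)-linear (Hermitian) stabilizer code has a set of stabilizer generators with paired support, and the F₂-dimension of S is even. -/

import Mathlib

/-- Binary symplectic representation of `n`-qubit Pauli operators (up to phase). -/
abbrev M (n : ℕ) : Type := Fin n → ZMod 2 × ZMod 2

/-- The support of a Pauli vector: the qubits on which it acts nontrivially. -/
def suppP {n : ℕ} (v : M n) : Set (Fin n) := {j | v j ≠ 0}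

/-- The map cyclically permuting the Pauli types X, Z, Y on every qubit. -/
def Tmap {n : ℕ} (v : M n) : M n := fun j => ((v j).2, (v j).1 + (v j).2)

open Polynomial

noncomputable section AuxF4

/-- The per-qubit action of `Tmap`. -/
def Tp (p : ZMod 2 × ZMod 2) : ZMod 2 × ZMod 2 := (p.2, p.1 + p.2)

lemma Tmap_apply' {n : ℕ} (v : M n) (j : Fin n) : Tmap v j = Tp (v j) := rfl

/-- The minimal polynomial `X² + X + 1` of ω over F₂. -/
def qpoly : (ZMod 2)[X] := X ^ 2 + X + 1

lemma qpoly_natDegree : qpoly.natDegree = 2 := by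
  unfold qpoly; compute_degree!

lemma qpoly_ne_zero : qpoly ≠ 0 := by
  intro h
  have := qpoly_natDegree
  rw [h] at this
  simp at this

lemma qpoly_irreducible : Irreducible qpoly := by
  rw [Polynomial.irreducible_iff_roots_eq_zero_of_degree_le_three
    (by rw [qpoly_natDegree]) (by rw [qpoly_natDegree]; omega)]
  rw [Multiset.eq_zero_iff_forall_notMem]
  intro a ha
  rw [mem_roots qpoly_ne_zero] at ha
  have heval : qpoly.eval a = a ^ 2 + a + 1 := by simp [qpoly]
  have ha' : a ^ 2 + a + 1 = 0 := by rw [← heval]; exact ha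
  have hall : ∀ b : ZMod 2, b ^ 2 + b + 1 ≠ 0 := by decide
  exact hall a ha'

instance : Fact (Irreducible qpoly) := ⟨qpoly_irreducible⟩

/-- The field GF(4). -/
abbrev F4 : Type := AdjoinRoot qpoly

/-- `Tmap` as an F₂-linear map. -/
def TL (n : ℕ) : M n →ₗ[ZMod 2] M n where
  toFun := Tmap
  map_add' u v := by
    funext j
    have h : ∀ p q : ZMod 2 × ZMod 2, Tp (p + q) = Tp p + Tp q := by decide
    exact h (u j) (v j)
  map_smul' c v := by
    funext j
    have h : ∀ (c : ZMod 2) (p : ZMod 2 × ZMod 2), Tp (c • p) = c • Tp p := by decide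
    exact h c (v j)

end AuxF4

set_option maxHeartbeats 1000000 in
set_option synthInstance.maxHeartbeats 400000 in
theorem stmt9 (n : ℕ) (S : Submodule (ZMod 2) (M n))
    (hT : Tmap '' (S : Set (M n)) ⊆ (S : Set (M n))) :
    (∃ (m : ℕ) (v : Fin m → M n), (∀ i, v i ∈ S) ∧
      ∃ b : Module.Basis (Fin m ⊕ Fin m) (ZMod 2) S,
        (∀ i, (b (Sum.inl i) : M n) = v i) ∧
        (∀ i, (b (Sum.inr i) : M n) = Tmap (v i)) ∧
        (∀ i, suppP (v i) = suppP (Tmap (v i)) ∧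
          suppP (v i) = suppP (v i + Tmap (v i)))) ∧
    Even (Module.finrank (ZMod 2) S) := by
  classical
  -- restriction of T to S
  have hmem : ∀ x ∈ S, TL n x ∈ S := fun x hx => hT ⟨x, hx, rfl⟩
  set TS : S →ₗ[ZMod 2] S := (TL n).restrict hmem with hTS
  -- T² + T + 1 = 0 on S
  have hkey : ∀ p : ZMod 2 × ZMod 2, Tp (Tp p) + Tp p + p = 0 := by decide
  have hres : ∀ y : S, ((TS y : S) : M n) = Tmap (y : M n) := fun y => rfl
  have hsq : (TS * TS) + TS + 1 = 0 := by
    apply LinearMap.ext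
    intro x
    apply Subtype.ext
    simp only [LinearMap.add_apply, Module.End.mul_apply, Module.End.one_apply,
      Submodule.coe_add, LinearMap.zero_apply, ZeroMemClass.coe_zero, hres]
    funext j
    exact hkey ((x : M n) j)
  have hEnd : (Polynomial.aeval TS) qpoly = 0 := by
    rw [qpoly, map_add, map_add, map_pow, Polynomial.aeval_X, map_one, pow_two]
    exact hsq
  have hdvd : ∀ p ∈ Ideal.span {qpoly}, (Polynomial.aeval TS) p = 0 := by
    intro p hp
    rw [Ideal.mem_span_singleton] at hp
    obtain ⟨g, rfl⟩ := hp
    rw [map_mul, hEnd, zero_mul]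
  -- GF(4)-module structure on S
  let φ : F4 →+* Module.End (ZMod 2) S :=
    Ideal.Quotient.lift (Ideal.span {qpoly}) (Polynomial.aeval TS).toRingHom hdvd
  letI : Module F4 S := Module.compHom S φ
  have hsmul : ∀ (c : F4) (x : S), c • x = φ c x := fun c x => rfl
  haveI : IsScalarTower (ZMod 2) F4 S := by
    constructor
    intro r c x
    have hr : r = 0 ∨ r = 1 := by
      revert r; decide
    rcases hr with rfl | rfl
    · rw [zero_smul, zero_smul, zero_smul]
    · rw [one_smul, one_smul]
  haveI : Module.Finite F4 S := Module.Finite.of_finite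
  -- GF(4)-basis of S
  set m : ℕ := Module.finrank F4 S with hm
  let c : Module.Basis (Fin m) F4 S := Module.finBasis F4 S
  -- F₂-basis (1, ω) of GF(4)
  let pb : PowerBasis (ZMod 2) F4 := AdjoinRoot.powerBasis qpoly_ne_zero
  have hdim : pb.dim = 2 := by
    simpa [pb, AdjoinRoot.powerBasis] using qpoly_natDegree
  let b2 : Module.Basis (Fin 2) (ZMod 2) F4 := pb.basis.reindex (finCongr hdim)
  have hb2 : ∀ i : Fin 2, b2 i = pb.gen ^ (i : ℕ) := by
    intro i
    simp [b2, Module.Basis.reindex_apply, PowerBasis.coe_basis]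
  -- combined F₂-basis of S
  let e : (Fin m ⊕ Fin m) ≃ (Fin 2 × Fin m) :=
    { toFun := Sum.elim (fun i => ((0 : Fin 2), i)) (fun i => ((1 : Fin 2), i))
      invFun := fun p => if p.1 = 0 then Sum.inl p.2 else Sum.inr p.2
      left_inv := by rintro (i | i) <;> simp
      right_inv := by
        rintro ⟨a, i⟩
        fin_cases a <;> simp }
  let B : Module.Basis (Fin m ⊕ Fin m) (ZMod 2) S := (b2.smulTower c).reindex e.symm
  have hB : ∀ x, B x = b2 (e x).1 • c (e x).2 := by
    intro x
    simp [B, Module.Basis.reindex_apply, Module.Basis.smulTower_apply]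
  have hgen : pb.gen = AdjoinRoot.root qpoly := AdjoinRoot.powerBasis_gen qpoly_ne_zero
  have hroot_smul : ∀ x : S, (AdjoinRoot.root qpoly) • x = TS x := by
    intro x
    rw [hsmul]
    have hroot : φ (AdjoinRoot.root qpoly) = TS := by
      have : AdjoinRoot.root qpoly = Ideal.Quotient.mk (Ideal.span {qpoly}) X := rfl
      rw [this]
      have h2 : φ ((Ideal.Quotient.mk (Ideal.span {qpoly})) X) = (Polynomial.aeval TS) X :=
        Ideal.Quotient.lift_mk _ _ _
      rw [h2]
      exact Polynomial.aeval_X TS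
    rw [hroot]
  have hBl : ∀ i : Fin m, B (Sum.inl i) = c i := by
    intro i
    rw [hB]
    show b2 0 • c i = c i
    rw [hb2]
    simp only [Fin.val_zero, pow_zero]
    exact one_smul F4 (c i)
  have hBr : ∀ i : Fin m, B (Sum.inr i) = TS (c i) := by
    intro i
    rw [hB]
    show b2 1 • c i = TS (c i)
    rw [hb2]
    simp only [Fin.val_one, pow_one]
    rw [hgen]
    exact hroot_smul (c i)
  -- the vectors
  refine ⟨⟨m, fun i => ((c i : S) : M n), fun i => (c i).2, B, ?_, ?_, ?_⟩, ?_⟩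
  · intro i; rw [hBl]
  · intro i
    rw [hBr]
    rfl
  · intro i
    set w : M n := ((c i : S) : M n)
    constructor
    · have h : ∀ p : ZMod 2 × ZMod 2, (p ≠ 0) ↔ (Tp p ≠ 0) := by decide
      exact Set.ext fun j => h (w j)
    · have h : ∀ p : ZMod 2 × ZMod 2, (p ≠ 0) ↔ (p + Tp p ≠ 0) := by decide
      exact Set.ext fun j => h (w j)
  · have := Module.finrank_eq_card_basis B
    rw [this]
    simp only [Fintype.card_sum, Fintype.card_fin]
    exact ⟨m, rfl⟩
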